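/- arXiv:1102.4784 — 3 statements merged into one kernel-verified Lean document; each statement's English description precedes it below -/
import Mathlib

section
/- Every strongly open subset of the unit ball B¹(H) of B(H) is an Fσ set in the weak operator topology: it is a countable union of weakly closed sets. -/
/-!
Strong neighbourhoods of an operator `T` contain sets `{A | ‖A ξᵢ - T ξᵢ‖ ≤ ε, i ≤ n}`, which are
weakly closed because closed balls of `H` are weakly closed. On the unit ball the strong topology
is second countable: the operators are uniformly Lipschitz, so pointwise convergence on a countable
dense set already gives pointwise convergence everywhere. An open `S` is therefore the union of the
weak closures of those members of a countable strong basis whose weak closure lies in `S`.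
-/

open scoped Topology InnerProductSpace ComplexInnerProductSpace
open TopologicalSpace Set Filter Metric

theorem exists_nat_iUnion_isClosed_eq_of_isOpen {X : Type*} (w : TopologicalSpace X)
    [TopologicalSpace X] [SecondCountableTopology X]
    (hclosed : ∀ x, ∀ U ∈ 𝓝 x, ∃ C ∈ 𝓝 x, IsClosed[w] C ∧ C ⊆ U) {S : Set X} (hS : IsOpen S) :
    ∃ F : ℕ → Set X, (∀ n, IsClosed[w] (F n)) ∧ S = ⋃ n, F n := by
  let 𝓒 : Set (Set X) := insert ∅ (closure[w] '' {B ∈ countableBasis X | closure[w] B ⊆ S})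
  have h𝓒 : 𝓒.Countable :=
    (((countable_countableBasis X).mono fun _ hB => hB.1).image _).insert ∅
  obtain ⟨F, hF⟩ := h𝓒.exists_eq_range (insert_nonempty _ _)
  have hmem : ∀ n, F n ∈ 𝓒 := fun n => hF ▸ mem_range_self n
  refine ⟨F, fun n => ?_, subset_antisymm ?_ ?_⟩
  · rcases hmem n with h | ⟨B, -, h⟩
    · exact h ▸ @isClosed_empty X w
    · exact h ▸ @isClosed_closure X w B
  · intro x hx
    obtain ⟨C, hCx, hCw, hCS⟩ := hclosed x S (hS.mem_nhds hx)
    obtain ⟨B, hB, hxB, hBC⟩ := (isBasis_countableBasis X).mem_nhds_iff.1 hCx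
    have hBS : closure[w] B ⊆ S := ((@closure_minimal X w) hBC hCw).trans hCS
    obtain ⟨n, hn⟩ := hF ▸ (show closure[w] B ∈ 𝓒 from Or.inr ⟨B, ⟨hB, hBS⟩, rfl⟩)
    exact mem_iUnion.2 ⟨n, hn ▸ @subset_closure X w B x hxB⟩
  · refine iUnion_subset fun n => ?_
    rcases hmem n with h | ⟨B, ⟨-, hBS⟩, h⟩
    · exact h ▸ empty_subset S
    · exact h ▸ hBS

theorem exists_isClosed_subset_of_mem_nhds_iInf_induced {X ι E : Type*} [PseudoMetricSpace E]
    (f : ι → X → E) (w : TopologicalSpace X)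
    (hw : ∀ i y ε, 0 < ε → IsClosed[w] (f i ⁻¹' closedBall y ε)) (x : X) :
    ∀ U ∈ @nhds X (⨅ i, induced (f i) inferInstance) x,
      ∃ C ∈ @nhds X (⨅ i, induced (f i) inferInstance) x, IsClosed[w] C ∧ C ⊆ U := by
  have hnhds : @nhds X (⨅ i, induced (f i) inferInstance) x = ⨅ i, comap (f i) (𝓝 (f i x)) := by
    simp only [nhds_iInf, nhds_induced]
  have hb := HasBasis.iInf' fun i => (nhds_basis_closedBall (x := f i x)).comap (f i)
  rw [hnhds]
  intro U hU
  obtain ⟨⟨I, ε⟩, ⟨hI, hε⟩, hIU⟩ := hb.mem_iff.1 hU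
  exact ⟨_, hb.mem_of_mem ⟨hI, hε⟩, isClosed_biInter fun i hi => hw i _ _ (hε i hi), hIU⟩

theorem isClosed_preimage_closedBall_of_continuous_inner {𝕜 X E : Type*} [RCLike 𝕜]
    [NormedAddCommGroup E] [InnerProductSpace 𝕜 E] [TopologicalSpace X] {f : X → E}
    (hf : ∀ η, Continuous fun x => ⟪f x, η⟫_𝕜) (v : E) {c : ℝ} (hc : 0 ≤ c) :
    IsClosed (f ⁻¹' closedBall v c) := by
  have hball : closedBall v c = ⋂ η, {y | ‖⟪y - v, η⟫_𝕜‖ ≤ c * ‖η‖} := by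
    ext y
    simp only [mem_closedBall, dist_eq_norm, mem_iInter, mem_ofPred_eq]
    refine ⟨fun h η => (norm_inner_le_norm _ _).trans (by gcongr), fun h => ?_⟩
    have hself := h (y - v)
    rw [inner_self_eq_norm_sq_to_K, norm_pow, RCLike.norm_ofReal, abs_norm, sq] at hself
    rcases (norm_nonneg (y - v)).eq_or_lt with h0 | hpos
    · exact h0 ▸ hc
    · exact le_of_mul_le_mul_right hself hpos
  rw [hball, preimage_iInter]
  refine isClosed_iInter fun η => isClosed_le (f := fun x => ‖⟪f x - v, η⟫_𝕜‖) ?_ continuous_const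
  simp only [inner_sub_left]
  exact ((hf η).sub continuous_const).norm

section UnitBall

variable {𝕜 E F : Type*} [NontriviallyNormedField 𝕜] [SeminormedAddCommGroup E]
  [NormedSpace 𝕜 E] [SeminormedAddCommGroup F] [NormedSpace 𝕜 F]

theorem continuous_apply_unitBall_of_denseRange {ι : Type*} {d : ι → E} (hd : DenseRange d)
    (x : E) :
    Continuous[⨅ i, induced (fun A : {T : E →L[𝕜] F // ‖T‖ ≤ 1} => A.1 (d i)) inferInstance,
      inferInstance] fun A => A.1 x := by
  let _ : TopologicalSpace {T : E →L[𝕜] F // ‖T‖ ≤ 1} :=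
    ⨅ i, induced (fun A : {T : E →L[𝕜] F // ‖T‖ ≤ 1} => A.1 (d i)) inferInstance
  have : (comap d (𝓝 x)).NeBot := comap_neBot fun t ht => by
    obtain ⟨_, ⟨i, rfl⟩, hi⟩ := hd.inter_nhds_nonempty ht
    exact ⟨i, hi⟩
  refine TendstoUniformly.continuous (p := comap d (𝓝 x)) (F := fun i A => A.1 (d i)) ?_
    (Frequently.of_forall fun i => continuous_iInf_dom continuous_induced_dom)
  refine Metric.tendstoUniformly_iff.2 fun ε hε => ?_
  filter_upwards [preimage_mem_comap (ball_mem_nhds x hε)] with i hi A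
  calc dist (A.1 x) (A.1 (d i)) ≤ ‖A.1‖ * dist x (d i) := A.1.dist_le_opNorm _ _
    _ ≤ 1 * dist x (d i) := by gcongr; exact A.2
    _ < ε := by rw [one_mul, dist_comm]; exact hi

theorem iInf_induced_apply_unitBall_of_denseRange {ι : Type*} {d : ι → E} (hd : DenseRange d) :
    ⨅ i, induced (fun A : {T : E →L[𝕜] F // ‖T‖ ≤ 1} => A.1 (d i)) inferInstance =
      ⨅ x, induced (fun A : {T : E →L[𝕜] F // ‖T‖ ≤ 1} => A.1 x) inferInstance :=
  le_antisymm
    (le_iInf fun x => continuous_iff_le_induced.1 (continuous_apply_unitBall_of_denseRange hd x))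
    (le_iInf fun i => iInf_le _ (d i))

theorem secondCountableTopology_unitBall_pointwise [SeparableSpace E] [SecondCountableTopology F] :
    @SecondCountableTopology {T : E →L[𝕜] F // ‖T‖ ≤ 1}
      (⨅ x, induced (fun A : {T : E →L[𝕜] F // ‖T‖ ≤ 1} => A.1 x) inferInstance) := by
  rw [← iInf_induced_apply_unitBall_of_denseRange (denseRange_denseSeq E)]
  exact secondCountableTopology_iInf fun _ => secondCountableTopology_induced _ _ _

end UnitBall

/-- Every subset of the unit ball of `B(H)` (`H` separable) that is open in the
strong operator topology is an `Fσ` set in the weak operator topology. -/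
theorem stmt4 {H : Type*} [NormedAddCommGroup H] [InnerProductSpace ℂ H]
    [TopologicalSpace.SeparableSpace H]
    (sot wot : TopologicalSpace (H →L[ℂ] H))
    (hsot : sot = ⨅ (ξ : H),
      TopologicalSpace.induced (fun T : H →L[ℂ] H => T ξ) inferInstance)
    (hwot : wot = ⨅ (ξ : H) (η : H),
      TopologicalSpace.induced (fun T : H →L[ℂ] H => ⟪T ξ, η⟫) inferInstance)
    (S : Set {T : H →L[ℂ] H // ‖T‖ ≤ 1})
    (hS : @IsOpen _ (@instTopologicalSpaceSubtype _ _ sot) S) :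
    ∃ F : ℕ → Set {T : H →L[ℂ] H // ‖T‖ ≤ 1},
      (∀ n, @IsClosed _ (@instTopologicalSpaceSubtype _ _ wot) (F n)) ∧
      S = ⋃ n, F n := by
  have hinner : ∀ ξ η : H, Continuous[wot, inferInstance] fun T : H →L[ℂ] H => ⟪T ξ, η⟫ := by
    subst hwot
    exact fun ξ η => continuous_iInf_dom (continuous_iInf_dom continuous_induced_dom)
  have hclosed : ∀ (ξ v : H) (ε : ℝ), 0 < ε →
      IsClosed[@instTopologicalSpaceSubtype _ (fun T => ‖T‖ ≤ 1) wot]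
        ((fun A => A.1 ξ) ⁻¹' closedBall v ε) := by
    intro ξ v ε hε
    let _ : TopologicalSpace (H →L[ℂ] H) := wot
    exact isClosed_preimage_closedBall_of_continuous_inner
      (fun η => (hinner ξ η).comp continuous_subtype_val) v hε.le
  have hsotBall : @instTopologicalSpaceSubtype _ (fun T => ‖T‖ ≤ 1) sot =
      ⨅ ξ : H, induced (fun A : {T : H →L[ℂ] H // ‖T‖ ≤ 1} => A.1 ξ) inferInstance := by
    simp only [hsot, instTopologicalSpaceSubtype, induced_iInf, induced_compose]
    rfl
  exact @exists_nat_iUnion_isClosed_eq_of_isOpen _ _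
    (⨅ ξ : H, induced (fun A : {T : H →L[ℂ] H // ‖T‖ ≤ 1} => A.1 ξ) inferInstance)
    secondCountableTopology_unitBall_pointwise
    (exists_isClosed_subset_of_mem_nhds_iInf_induced _ _ hclosed) _ (hsotBall ▸ hS)
end

section
/- Let T ∈ B(H) with ‖T‖ ≤ 1, let T = u|T| be its polar decomposition with p = u*u, and let ξ ∈ H with ‖ξ‖ ≤ 1. If |⟨ξ, ξ⟩ − ⟨Tξ, Tξ⟩| < ε² for some 0 < ε < 1, then ‖ξ − pξ‖ < ε. -/
open scoped ComplexInnerProductSpace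

/-! Since `P² = T*T`, the vectors `Pξ` and `Tξ` have the same length, so `‖P‖ = ‖T‖ ≤ 1`.
As `P p = P`, this gives `‖Pξ‖ = ‖P(pξ)‖ ≤ ‖pξ‖`, and Pythagoras for the orthogonal
projection `p` yields `‖ξ - pξ‖² = ‖ξ‖² - ‖pξ‖² ≤ ‖ξ‖² - ‖Tξ‖² < ε²`. -/

section

variable {𝕜 E F G : Type*} [RCLike 𝕜]
  [NormedAddCommGroup E] [InnerProductSpace 𝕜 E] [CompleteSpace E]
  [NormedAddCommGroup F] [InnerProductSpace 𝕜 F]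
  [NormedAddCommGroup G] [InnerProductSpace 𝕜 G]

namespace ContinuousLinearMap

variable [CompleteSpace F] [CompleteSpace G]

theorem norm_apply_eq_of_adjoint_comp_self_eq {A : E →L[𝕜] F} {B : E →L[𝕜] G}
    (h : adjoint A ∘L A = adjoint B ∘L B) (x : E) : ‖A x‖ = ‖B x‖ := by
  have hsq : ‖A x‖ ^ 2 = ‖B x‖ ^ 2 := by
    rw [apply_norm_sq_eq_inner_adjoint_left, apply_norm_sq_eq_inner_adjoint_left, h]
  exact (pow_left_inj₀ (norm_nonneg _) (norm_nonneg _) two_ne_zero).mp hsq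

theorem opNorm_eq_of_adjoint_comp_self_eq {A : E →L[𝕜] F} {B : E →L[𝕜] G}
    (h : adjoint A ∘L A = adjoint B ∘L B) : ‖A‖ = ‖B‖ :=
  le_antisymm
    (A.opNorm_le_bound (norm_nonneg B) fun x =>
      (norm_apply_eq_of_adjoint_comp_self_eq h x).trans_le (B.le_opNorm x))
    (B.opNorm_le_bound (norm_nonneg A) fun x =>
      (norm_apply_eq_of_adjoint_comp_self_eq h x).symm.trans_le (A.le_opNorm x))

end ContinuousLinearMap

namespace IsStarProjection

theorem norm_sub_apply_sq {p : E →L[𝕜] E} (hp : IsStarProjection p) (x : E) :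
    ‖x - p x‖ ^ 2 = ‖x‖ ^ 2 - ‖p x‖ ^ 2 := by
  obtain ⟨_, hp_eq⟩ := isStarProjection_iff_eq_starProjection_range.mp hp
  have := p.range.norm_sq_eq_add_norm_sq_starProjection x
  rw [← hp_eq, p.range.starProjection_orthogonal_val, ← hp_eq] at this
  linarith

theorem norm_sub_apply_sq_le {p : E →L[𝕜] E} {A : E →L[𝕜] F} (hp : IsStarProjection p)
    (hA : A ∘L p = A) (hA_le : ‖A‖ ≤ 1) (x : E) :
    ‖x - p x‖ ^ 2 ≤ ‖x‖ ^ 2 - ‖A x‖ ^ 2 := by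
  have hAx : ‖A x‖ ≤ ‖p x‖ :=
    calc ‖A x‖ = ‖A (p x)‖ := by rw [← ContinuousLinearMap.comp_apply, hA]
      _ ≤ ‖p x‖ := (A.le_of_opNorm_le hA_le _).trans_eq (one_mul _)
  rw [hp.norm_sub_apply_sq]
  gcongr

end IsStarProjection

end

theorem stmt11_general {H : Type*} [NormedAddCommGroup H] [InnerProductSpace ℂ H]
    [CompleteSpace H] (T P p : H →L[ℂ] H)
    (hTnorm : ‖T‖ ≤ 1)
    (hPpos : P.IsPositive)
    (hPsq : P * P = ContinuousLinearMap.adjoint T * T)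
    (hproj : p * p = p) (hpsa : IsSelfAdjoint p)
    (hPp : P * p = P)
    (ξ : H)
    (ε : ℝ) (hε0 : 0 < ε)
    (hin : ‖⟪ξ, ξ⟫ - ⟪T ξ, T ξ⟫‖ < ε ^ 2) :
    ‖ξ - p ξ‖ < ε := by
  have hPT : ContinuousLinearMap.adjoint P ∘L P = ContinuousLinearMap.adjoint T ∘L T := by
    rw [hPpos.isSelfAdjoint.adjoint_eq]
    exact hPsq
  have hP_le : ‖P‖ ≤ 1 :=
    (ContinuousLinearMap.opNorm_eq_of_adjoint_comp_self_eq hPT).trans_le hTnorm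
  have hdefect : ‖ξ‖ ^ 2 - ‖T ξ‖ ^ 2 < ε ^ 2 := by
    refine lt_of_le_of_lt (le_of_eq_of_le ?_ (Complex.re_le_norm _)) hin
    rw [inner_self_eq_norm_sq_to_K, inner_self_eq_norm_sq_to_K]
    norm_cast
  have hdist : ‖ξ - p ξ‖ ^ 2 < ε ^ 2 :=
    calc ‖ξ - p ξ‖ ^ 2 ≤ ‖ξ‖ ^ 2 - ‖P ξ‖ ^ 2 :=
          (⟨hproj, hpsa⟩ : IsStarProjection p).norm_sub_apply_sq_le hPp hP_le ξ
      _ = ‖ξ‖ ^ 2 - ‖T ξ‖ ^ 2 := by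
          rw [ContinuousLinearMap.norm_apply_eq_of_adjoint_comp_self_eq hPT]
      _ < ε ^ 2 := hdefect
  exact lt_of_pow_lt_pow_left₀ 2 hε0.le hdist

/-- Let `‖T‖ ≤ 1`, and let `T = u P` be its polar decomposition
(`P = |T|` positive with `P² = T*T`, `p = u*u` the initial projection of the
partial isometry `u`, with `P p = P`, i.e. `p` fixes the closure of the range
of `P`). If `‖ξ‖ ≤ 1` and `|⟪ξ, ξ⟫ - ⟪Tξ, Tξ⟫| < ε²` for some `0 < ε < 1`,
then `‖ξ - pξ‖ < ε`. -/
theorem stmt11 {H : Type*} [NormedAddCommGroup H] [InnerProductSpace ℂ H]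
    [CompleteSpace H] (T u P p : H →L[ℂ] H)
    (hTnorm : ‖T‖ ≤ 1)
    (hPpos : P.IsPositive)
    (hPsq : P * P = ContinuousLinearMap.adjoint T * T)
    (hpolar : T = u * P)
    (hp : p = ContinuousLinearMap.adjoint u * u)
    (hproj : p * p = p) (hpsa : IsSelfAdjoint p)
    (hPp : P * p = P)
    (ξ : H) (hξ : ‖ξ‖ ≤ 1)
    (ε : ℝ) (hε0 : 0 < ε) (hε1 : ε < 1)
    (hin : ‖⟪ξ, ξ⟫ - ⟪T ξ, T ξ⟫‖ < ε ^ 2) :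
    ‖ξ - p ξ‖ < ε :=
  stmt11_general T P p hTnorm hPpos hPsq hproj hpsa hPp ξ ε hε0 hin
end

section
/- The set P₃ = {x ∈ 2^(ℕ×ℕ) : every row of x is eventually zero} continuously reduces to F₂: there is a continuous map f : 2^(ℕ×ℕ) → 2^(ℕ×ℕ) × 2^(ℕ×ℕ) such that x ∈ P₃ iff f(x) ∈ F₂. Concretely, fixing z ∈ 2^(ℕ×ℕ) whose rows enumerate all eventually-zero binary sequences, the map x ↦ (x ⊕ z, z) works, where (x⊕z)(2k+1,·) = x(k,·) and (x⊕z)(2k,·) = z(k,·). -/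
/-- The equivalence relation `F₂` on Cantor space `2^(ℕ×ℕ)`:
`x F₂ y` iff the set of rows of `x` equals the set of rows of `y`. -/
def F2 : Set ((ℕ × ℕ → Bool) × (ℕ × ℕ → Bool)) :=
  {p | Set.range (fun n => fun k => p.1 (n, k)) =
       Set.range (fun m => fun k => p.2 (m, k))}

/-- `P₃`: the set of `x ∈ 2^(ℕ×ℕ)` all of whose rows are eventually zero. -/
def P3 : Set (ℕ × ℕ → Bool) :=
  {x | ∀ n, ∃ k, ∀ m ≥ k, x (n, m) = false}

/-- The interleaving `x ⊕ z`: row `2k+1` is row `k` of `x`, and row `2k` is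
row `k` of `z`. -/
def oplus (x z : ℕ × ℕ → Bool) : ℕ × ℕ → Bool :=
  fun p => if p.1 % 2 = 1 then x (p.1 / 2, p.2) else z (p.1 / 2, p.2)


/-!
The rows of `x ⊕ z` are the rows of `x` together with those of `z`, so `(x ⊕ z, z) ∈ F₂` says
exactly that every row of `x` is a row of `z`. When the rows of `z` are precisely the
eventually-zero sequences, this is `x ∈ P₃`.
-/

open Function

theorem oplus_apply_odd (x z : ℕ × ℕ → Bool) (n k : ℕ) : oplus x z (2 * n + 1, k) = x (n, k) := by
  simp only [oplus]
  rw [if_pos (by omega), show (2 * n + 1) / 2 = n by omega]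

theorem oplus_apply_even (x z : ℕ × ℕ → Bool) (n k : ℕ) : oplus x z (2 * n, k) = z (n, k) := by
  simp [oplus]

theorem range_curry_oplus (x z : ℕ × ℕ → Bool) :
    Set.range (curry (oplus x z)) = Set.range (curry x) ∪ Set.range (curry z) := by
  ext f
  constructor
  · rintro ⟨n, rfl⟩
    rcases Nat.even_or_odd' n with ⟨m, rfl | rfl⟩
    · exact Or.inr ⟨m, funext fun k => (oplus_apply_even x z m k).symm⟩
    · exact Or.inl ⟨m, funext fun k => (oplus_apply_odd x z m k).symm⟩
  · rintro (⟨m, rfl⟩ | ⟨m, rfl⟩)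
    · exact ⟨2 * m + 1, funext fun k => oplus_apply_odd x z m k⟩
    · exact ⟨2 * m, funext fun k => oplus_apply_even x z m k⟩

theorem mk_oplus_mem_F2_iff (x z : ℕ × ℕ → Bool) :
    (oplus x z, z) ∈ F2 ↔ Set.range (curry x) ⊆ Set.range (curry z) := by
  change Set.range (curry (oplus x z)) = Set.range (curry z) ↔ _
  rw [range_curry_oplus, Set.union_eq_right]

theorem mem_P3_iff_range_curry_subset (x : ℕ × ℕ → Bool) :
    x ∈ P3 ↔ Set.range (curry x) ⊆ {f : ℕ → Bool | ∃ k, ∀ m ≥ k, f m = false} := by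
  rw [Set.range_subset_iff]; rfl

theorem continuous_oplus_left (z : ℕ × ℕ → Bool) : Continuous fun x => oplus x z := by
  refine continuous_pi fun p => ?_
  by_cases hp : p.1 % 2 = 1
  · simpa only [oplus, hp, if_true] using continuous_apply (p.1 / 2, p.2)
  · simpa only [oplus, hp, if_false] using continuous_const

/-- `P₃` continuously reduces to `F₂`: if the rows of `z` enumerate exactly the
eventually-zero binary sequences, then the continuous map `x ↦ (x ⊕ z, z)`
satisfies `x ∈ P₃` iff `(x ⊕ z, z) ∈ F₂`. -/
theorem stmt19 (z : ℕ × ℕ → Bool)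
    (hz : Set.range (fun n => fun k => z (n, k)) =
      {f : ℕ → Bool | ∃ k, ∀ m ≥ k, f m = false}) :
    Continuous (fun x : ℕ × ℕ → Bool => ((oplus x z, z) :
      (ℕ × ℕ → Bool) × (ℕ × ℕ → Bool))) ∧
    ∀ x : ℕ × ℕ → Bool, x ∈ P3 ↔ (oplus x z, z) ∈ F2 := by
  refine ⟨(continuous_oplus_left z).prodMk continuous_const, fun x => ?_⟩
  rw [mk_oplus_mem_F2_iff, mem_P3_iff_range_curry_subset]
  exact hz ▸ Iff.rfl
end
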